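/- arXiv:2011.09466 — 5 statements merged into one kernel-verified Lean document; each statement's English description precedes it below -/
import Mathlib

section
/- If C is a class of languages that contains all singleton languages and is closed under nested iterated substitution, concatenation, union, and Kleene star, then C has the monadic ancestor property. -/
/-!
Let `E = lhsOrSelf T []` be the words that some rule erases, together with `[]`, and
`Tₐ = lhsOrSelf T [a]` the words that some rule rewrites to the letter `a`, together with `[a]`.
For the nested substitution `σ a = E Tₐ E` (`ancestorSubst T`) the ancestors of `L` are exactly
`σ^∞(E∗ L)`. Every word of `σ a` rewrites to `a` and every word of `E∗` to `[]`, so `σ^∞(E∗ L)`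
consists of ancestors. Conversely, undoing one rewriting step is a substitution step: a rule
`ℓ → b` is inverted by `ℓ ∈ σ b`, and a word `ℓ ∈ E` deleted next to a letter `c` comes back
through `ℓ c ∈ σ c` or `c ℓ ∈ σ c`. The one step that no substitution undoes erases a whole word
`ℓ` to `[] ∈ L`, and `E∗ L` contains `ℓ` already. Since `σ a`, `E∗ L ∈ C` by the closure
properties, so are the ancestors.
-/

/-- One step of rewriting: replace a factor `ℓ` by `r` for some rule `(ℓ, r) ∈ T`. -/
def OneStep {A : Type*} (T : Set (List A × List A)) (u v : List A) : Prop :=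
  ∃ x y ℓ r, (ℓ, r) ∈ T ∧ u = x ++ ℓ ++ y ∧ v = x ++ r ++ y

/-- A rewriting system is `=`-monadic if for every rule `(ℓ, r)`: `|ℓ| ≥ |r|`, `ℓ` is
nonempty, and `r` is a single letter or the empty word. -/
def IsEqMonadic {A : Type*} (T : Set (List A × List A)) : Prop :=
  ∀ ℓ r : List A, (ℓ, r) ∈ T → r.length ≤ ℓ.length ∧ ℓ ≠ [] ∧ r.length ≤ 1

/-- `T` is a `C`-rewriting system: for every right-hand side `r` actually occurring in `T`,
the language of corresponding left-hand sides lies in `C`. -/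
def IsCRewriting {A : Type*} (C : Set (Language A)) (T : Set (List A × List A)) : Prop :=
  ∀ r : List A, (∃ ℓ, (ℓ, r) ∈ T) → {ℓ : List A | (ℓ, r) ∈ T} ∈ C

/-- The ancestor set `⟨L⟩_T = { u : u →*_T w for some w ∈ L }`. -/
def Ancestors {A : Type*} (T : Set (List A × List A)) (L : Language A) : Language A :=
  {u : List A | ∃ w ∈ L, Relation.ReflTransGen (OneStep T) u w}

/-- The substitution `σ` applied to a single word, extended multiplicatively. -/
def SubstWord {A : Type*} (σ : A → Language A) : List A → Language A
  | [] => 1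
  | a :: w => σ a * SubstWord σ w

/-- The substitution `σ` applied to a language. -/
def SubstLang {A : Type*} (σ : A → Language A) (L : Language A) : Language A :=
  ⋃ w ∈ L, SubstWord σ w

/-- The nested iterated substitution `σ^∞` applied to `L`: the least fixed point obtained
by repeatedly applying the (nested, i.e. `a ∈ σ(a)`) substitution `σ`. -/
def IterSubst {A : Type*} (σ : A → Language A) (L : Language A) : Language A :=
  ⋃ n : ℕ, (SubstLang σ)^[n] L

/-- `C` is closed under nested iterated substitution. -/
def ClosedUnderNestedIterSubst {A : Type*} (C : Set (Language A)) : Prop :=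
  ∀ σ : A → Language A, (∀ a, σ a ∈ C) → (∀ a, [a] ∈ σ a) →
    ∀ L ∈ C, IterSubst σ L ∈ C

open Language Relation Computability

section Rewriting

variable {A : Type*} {T : Set (List A × List A)}

theorem OneStep.append_append {u v : List A} (h : OneStep T u v) (x y : List A) :
    OneStep T (x ++ u ++ y) (x ++ v ++ y) := by
  obtain ⟨p, q, ℓ, r, hT, rfl, rfl⟩ := h
  exact ⟨x ++ p, q ++ y, ℓ, r, hT, by simp, by simp⟩

theorem oneStep_of_mem {ℓ r : List A} (h : (ℓ, r) ∈ T) : OneStep T ℓ r :=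
  ⟨[], [], ℓ, r, h, by simp, by simp⟩

theorem reflTransGen_oneStep_append {u u' v v' : List A}
    (hu : ReflTransGen (OneStep T) u u') (hv : ReflTransGen (OneStep T) v v') :
    ReflTransGen (OneStep T) (u ++ v) (u' ++ v') :=
  (hu.lift (· ++ v) fun _ _ h => by simpa using h.append_append [] v).trans
    (hv.lift (u' ++ ·) fun _ _ h => by simpa using h.append_append u' [])

theorem reflTransGen_oneStep_of_mem_mul {M N : Language A} {m n w : List A}
    (hM : ∀ u ∈ M, ReflTransGen (OneStep T) u m) (hN : ∀ v ∈ N, ReflTransGen (OneStep T) v n)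
    (hw : w ∈ M * N) : ReflTransGen (OneStep T) w (m ++ n) := by
  obtain ⟨u, hu, v, hv, rfl⟩ := mem_mul.1 hw
  exact reflTransGen_oneStep_append (hM u hu) (hN v hv)

theorem le_ancestors (L : Language A) : L ≤ Ancestors T L :=
  fun w hw => ⟨w, hw, .refl⟩

theorem ancestors_le {L M : Language A} (hLM : L ≤ M)
    (hM : ∀ u v, OneStep T u v → v ∈ M → u ∈ M) : Ancestors T L ≤ M := by
  rintro u ⟨w, hw, huw⟩
  induction huw using ReflTransGen.head_induction_on with
  | refl => exact hLM hw
  | head huv _ ih => exact hM _ _ huv ih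

theorem mul_ancestors_le {E L : Language A} (hE : ∀ e ∈ E, ReflTransGen (OneStep T) e []) :
    E * Ancestors T L ≤ Ancestors T L := by
  intro u hu
  obtain ⟨e, he, v, ⟨w, hw, hvw⟩, rfl⟩ := mem_mul.1 hu
  exact ⟨w, hw, by simpa using reflTransGen_oneStep_append (hE e he) hvw⟩

end Rewriting

section Substitution

variable {A : Type*} {σ : A → Language A}

theorem substWord_append (u v : List A) :
    SubstWord σ (u ++ v) = SubstWord σ u * SubstWord σ v := by
  induction u with
  | nil => simp [SubstWord]
  | cons a u ih => simp [SubstWord, ih, mul_assoc]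

theorem substWord_singleton (a : A) : SubstWord σ [a] = σ a := by
  simp [SubstWord]

theorem mem_substWord_self (hσ : ∀ a, [a] ∈ σ a) (w : List A) : w ∈ SubstWord σ w := by
  induction w with
  | nil => exact nil_mem_one
  | cons a w ih => exact append_mem_mul (hσ a) ih

theorem append_append_mem_substWord (hσ : ∀ a, [a] ∈ σ a) {c : A} {m : List A} (hm : m ∈ σ c)
    (x y : List A) : x ++ m ++ y ∈ SubstWord σ (x ++ [c] ++ y) := by
  rw [substWord_append, substWord_append, substWord_singleton]
  exact append_mem_mul (append_mem_mul (mem_substWord_self hσ x) hm) (mem_substWord_self hσ y)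

theorem eq_nil_of_nil_mem_substWord (hσ : ∀ a, [] ∉ σ a) {w : List A}
    (h : [] ∈ SubstWord σ w) : w = [] := by
  cases w with
  | nil => rfl
  | cons a w =>
    obtain ⟨u, hu, v, -, huv⟩ := mem_mul.1 h
    exact absurd ((List.append_eq_nil_iff.1 huv).1 ▸ hu) (hσ a)

theorem reflTransGen_oneStep_of_mem_substWord {T : Set (List A × List A)}
    (hσ : ∀ a, ∀ v ∈ σ a, ReflTransGen (OneStep T) v [a]) :
    ∀ w, ∀ u ∈ SubstWord σ w, ReflTransGen (OneStep T) u w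
  | [], u, hu => (mem_one u).1 hu ▸ .refl
  | a :: w, _, hu =>
    reflTransGen_oneStep_of_mem_mul (hσ a) (reflTransGen_oneStep_of_mem_substWord hσ w) hu

theorem mem_substLang {L : Language A} {u : List A} :
    u ∈ SubstLang σ L ↔ ∃ w ∈ L, u ∈ SubstWord σ w :=
  Set.mem_iUnion₂.trans <| by simp only [exists_prop]; rfl

theorem substLang_mono : Monotone (SubstLang σ) := fun _ _ hLM _ hu =>
  let ⟨w, hw, hu⟩ := mem_substLang.1 hu
  mem_substLang.2 ⟨w, hLM hw, hu⟩

theorem mem_iterSubst_of_mem {L : Language A} {u : List A} (hu : u ∈ L) : u ∈ IterSubst σ L :=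
  Set.mem_iUnion.2 ⟨0, hu⟩

theorem substLang_iterSubst_le (L : Language A) : SubstLang σ (IterSubst σ L) ≤ IterSubst σ L := by
  intro u hu
  obtain ⟨w, hw, hu⟩ := mem_substLang.1 hu
  obtain ⟨n, hn⟩ := Set.mem_iUnion.1 hw
  refine Set.mem_iUnion.2 ⟨n + 1, ?_⟩
  rw [Function.iterate_succ_apply']
  exact mem_substLang.2 ⟨w, hn, hu⟩

theorem mem_iterSubst_of_mem_substWord {L : Language A} {w u : List A}
    (hw : w ∈ IterSubst σ L) (hu : u ∈ SubstWord σ w) : u ∈ IterSubst σ L :=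
  substLang_iterSubst_le L (mem_substLang.2 ⟨w, hw, hu⟩)

theorem iterSubst_le {L M : Language A} (hLM : L ≤ M) (hM : SubstLang σ M ≤ M) :
    IterSubst σ L ≤ M := by
  refine iSup_le fun n => ?_
  induction n with
  | zero => exact hLM
  | succ n ih =>
    rw [Function.iterate_succ_apply']
    exact (substLang_mono ih).trans hM

theorem nil_mem_of_nil_mem_iterSubst (hσ : ∀ a, [] ∉ σ a) {L : Language A}
    (h : [] ∈ IterSubst σ L) : [] ∈ L := by
  refine iterSubst_le (M := {u | u = [] → u ∈ L}) (fun u hu _ => hu) ?_ h rfl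
  rintro u hu rfl
  obtain ⟨w, hw, hnil⟩ := mem_substLang.1 hu
  obtain rfl := eq_nil_of_nil_mem_substWord hσ hnil
  exact hw rfl

theorem substLang_ancestors_le {T : Set (List A × List A)}
    (hσ : ∀ a, ∀ v ∈ σ a, ReflTransGen (OneStep T) v [a]) (L : Language A) :
    SubstLang σ (Ancestors T L) ≤ Ancestors T L := by
  intro u hu
  obtain ⟨v, ⟨w, hw, hvw⟩, huv⟩ := mem_substLang.1 hu
  exact ⟨w, hw, (reflTransGen_oneStep_of_mem_substWord hσ v u huv).trans hvw⟩

end Substitution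

section AncestorSubst

variable {A : Type*} {T : Set (List A × List A)}

def lhsOrSelf (T : Set (List A × List A)) (r : List A) : Language A :=
  (show Language A from {ℓ | (ℓ, r) ∈ T}) + {r}

theorem mem_lhsOrSelf {u r : List A} : u ∈ lhsOrSelf T r ↔ (u, r) ∈ T ∨ u = r :=
  Iff.rfl

theorem self_mem_lhsOrSelf (r : List A) : r ∈ lhsOrSelf T r :=
  mem_lhsOrSelf.2 (.inr rfl)

theorem mem_lhsOrSelf_of_mem {ℓ r : List A} (h : (ℓ, r) ∈ T) : ℓ ∈ lhsOrSelf T r :=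
  mem_lhsOrSelf.2 (.inl h)

theorem lhsOrSelf_mem {C : Set (Language A)} (hsing : ∀ w : List A, ({w} : Language A) ∈ C)
    (hunion : ∀ L₁ ∈ C, ∀ L₂ ∈ C, L₁ + L₂ ∈ C) (hT : IsCRewriting C T) (r : List A) :
    lhsOrSelf T r ∈ C := by
  by_cases hr : ∃ ℓ, (ℓ, r) ∈ T
  · exact hunion _ (hT r hr) _ (hsing r)
  · have hempty : (show Language A from {ℓ | (ℓ, r) ∈ T}) = 0 :=
      Set.eq_empty_of_forall_notMem fun ℓ hℓ => hr ⟨ℓ, hℓ⟩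
    rw [lhsOrSelf, hempty, zero_add]
    exact hsing r

theorem reflTransGen_oneStep_of_mem_lhsOrSelf {u r : List A} (h : u ∈ lhsOrSelf T r) :
    ReflTransGen (OneStep T) u r := by
  rcases mem_lhsOrSelf.1 h with h | rfl
  exacts [.single (oneStep_of_mem h), .refl]

def ancestorSubst (T : Set (List A × List A)) (a : A) : Language A :=
  lhsOrSelf T [] * lhsOrSelf T [a] * lhsOrSelf T []

theorem mem_ancestorSubst_of_mem {a : A} {e m f : List A} (he : e ∈ lhsOrSelf T [])
    (hm : m ∈ lhsOrSelf T [a]) (hf : f ∈ lhsOrSelf T []) : e ++ m ++ f ∈ ancestorSubst T a :=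
  append_mem_mul (append_mem_mul he hm) hf

theorem mem_ancestorSubst_of_mem_lhsOrSelf {a : A} {ℓ : List A} (h : ℓ ∈ lhsOrSelf T [a]) :
    ℓ ∈ ancestorSubst T a := by
  simpa using mem_ancestorSubst_of_mem (self_mem_lhsOrSelf _) h (self_mem_lhsOrSelf _)

theorem singleton_mem_ancestorSubst (a : A) : [a] ∈ ancestorSubst T a :=
  mem_ancestorSubst_of_mem (self_mem_lhsOrSelf _) (self_mem_lhsOrSelf _) (self_mem_lhsOrSelf _)

theorem reflTransGen_oneStep_of_mem_ancestorSubst {a : A} {v : List A}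
    (hv : v ∈ ancestorSubst T a) : ReflTransGen (OneStep T) v [a] := by
  simpa using reflTransGen_oneStep_of_mem_mul
    (fun _ => reflTransGen_oneStep_of_mem_mul (fun _ => reflTransGen_oneStep_of_mem_lhsOrSelf)
      (fun _ => reflTransGen_oneStep_of_mem_lhsOrSelf))
    (fun _ => reflTransGen_oneStep_of_mem_lhsOrSelf) hv

theorem nil_notMem_ancestorSubst (hT : IsEqMonadic T) (a : A) : [] ∉ ancestorSubst T a := by
  intro h
  obtain ⟨em, hem, f, -, hnil⟩ := mem_mul.1 h
  obtain ⟨e, -, m, hm, rfl⟩ := mem_mul.1 hem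
  obtain rfl : m = [] := (List.append_eq_nil_iff.1 (List.append_eq_nil_iff.1 hnil).1).2
  rcases mem_lhsOrSelf.1 hm with hm | hm
  exacts [(hT _ _ hm).2.1 rfl, List.cons_ne_nil a [] hm.symm]

theorem append_append_mem_substWord_ancestorSubst {e : List A} (he : e ∈ lhsOrSelf T [])
    {x y : List A} (hxy : x ++ y ≠ []) : x ++ e ++ y ∈ SubstWord (ancestorSubst T) (x ++ y) := by
  rcases List.eq_nil_or_concat x with rfl | ⟨x, c, rfl⟩
  · obtain ⟨c, y, rfl⟩ := List.exists_cons_of_ne_nil (by simpa using hxy)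
    simpa using append_append_mem_substWord singleton_mem_ancestorSubst
      (mem_ancestorSubst_of_mem (a := c) he (self_mem_lhsOrSelf _) (self_mem_lhsOrSelf _)) [] y
  · simpa using append_append_mem_substWord singleton_mem_ancestorSubst
      (mem_ancestorSubst_of_mem (a := c) (self_mem_lhsOrSelf _) (self_mem_lhsOrSelf _) he) x y

theorem mem_iterSubst_ancestorSubst_of_oneStep (hT : IsEqMonadic T) {L : Language A}
    {u v : List A} (huv : OneStep T u v)
    (hv : v ∈ IterSubst (ancestorSubst T) ((lhsOrSelf T [])∗ * L)) :
    u ∈ IterSubst (ancestorSubst T) ((lhsOrSelf T [])∗ * L) := by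
  obtain ⟨x, y, ℓ, r, hℓr, rfl, rfl⟩ := huv
  match r, hℓr with
  | [], hℓ =>
    rw [List.append_nil] at hv
    by_cases hxy : x ++ y = []
    · obtain ⟨rfl, rfl⟩ := List.append_eq_nil_iff.1 hxy
      obtain ⟨e, -, w, hw, hew⟩ :=
        mem_mul.1 (nil_mem_of_nil_mem_iterSubst (nil_notMem_ancestorSubst hT) hv)
      obtain rfl := (List.append_eq_nil_iff.1 hew).2
      have hℓ' : ℓ ∈ (lhsOrSelf T [])∗ * L := by
        simpa using
          append_mem_mul ((le_kstar : lhsOrSelf T [] ≤ _) (mem_lhsOrSelf_of_mem hℓ)) hw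
      simpa using mem_iterSubst_of_mem hℓ'
    · exact mem_iterSubst_of_mem_substWord hv
        (append_append_mem_substWord_ancestorSubst (mem_lhsOrSelf_of_mem hℓ) hxy)
  | [_], hℓ =>
    exact mem_iterSubst_of_mem_substWord hv <| append_append_mem_substWord
      singleton_mem_ancestorSubst (mem_ancestorSubst_of_mem_lhsOrSelf (mem_lhsOrSelf_of_mem hℓ)) x y
  | _ :: _ :: _, hℓ => simpa using (hT _ _ hℓ).2.2

theorem ancestors_eq_iterSubst (hT : IsEqMonadic T) (L : Language A) :
    Ancestors T L = IterSubst (ancestorSubst T) ((lhsOrSelf T [])∗ * L) := by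
  refine le_antisymm (ancestors_le (fun w hw => mem_iterSubst_of_mem ?_)
    fun _ _ => mem_iterSubst_ancestorSubst_of_oneStep hT) ?_
  · simpa using append_mem_mul (nil_mem_kstar _) hw
  · exact iterSubst_le
      (kstar_mul_le (le_ancestors L)
        (mul_ancestors_le fun _ => reflTransGen_oneStep_of_mem_lhsOrSelf))
      (substLang_ancestors_le (fun _ _ => reflTransGen_oneStep_of_mem_ancestorSubst) L)

end AncestorSubst

/-- If `C` is a class of languages that contains all singleton languages and is closed
under nested iterated substitution, concatenation, union, and Kleene star, then `C` has the
monadic ancestor property: for every `L ∈ C` and every `C`-`=`-monadic rewriting system `T`,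
the ancestor set `⟨L⟩_T` lies in `C`. -/
theorem monadic_ancestor_property_of_closures {A : Type*} (C : Set (Language A))
    (hsing : ∀ w : List A, ({w} : Language A) ∈ C)
    (hnis : ClosedUnderNestedIterSubst C)
    (hconc : ∀ L₁ ∈ C, ∀ L₂ ∈ C, L₁ * L₂ ∈ C)
    (hunion : ∀ L₁ ∈ C, ∀ L₂ ∈ C, L₁ + L₂ ∈ C)
    (hstar : ∀ L ∈ C, KStar.kstar L ∈ C) :
    ∀ L ∈ C, ∀ T : Set (List A × List A), IsEqMonadic T → IsCRewriting C T →
      Ancestors T L ∈ C := by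
  intro L hL T hmon hCT
  have hlhs := lhsOrSelf_mem hsing hunion hCT
  rw [ancestors_eq_iterSubst hmon]
  exact hnis _ (fun a => hconc _ (hconc _ (hlhs []) _ (hlhs [a])) _ (hlhs []))
    singleton_mem_ancestorSubst _ (hconc _ (hstar _ (hlhs [])) _ hL)
end

section
/- Let M be a monoid with finite generating set A. If the word problem WP_A^M = { u # v^rev : u, v ∈ A*, u = v in M } is a regular language, then M is finite. -/
/-- The word problem of a monoid `M` with respect to a finite generating set `A`
(given by the canonical surjection `π : A* → M`), as a language over `A ∪ {#}`
(modeled by `Option A`, with `none` playing the role of `#`):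
`WP_A^M = { u # v^rev : u, v ∈ A*, π(u) = π(v) }`. -/
def WordProblem {M : Type*} [Monoid M] {A : Type*} (π : FreeMonoid A →* M) :
    Language (Option A) :=
  {w : List (Option A) | ∃ u v : List A, π (FreeMonoid.ofList u) = π (FreeMonoid.ofList v) ∧
    w = u.map some ++ none :: (v.map some).reverse}

private lemma split_unique {A : Type*} : ∀ (u u' : List A) (v v' : List (Option A)),
    u.map some ++ none :: v = u'.map some ++ none :: v' → u = u' ∧ v = v' := by
  intro u
  induction u with
  | nil =>
    intro u' v v' h
    cases u' with
    | nil => simpa using h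
    | cons a u' => simp at h
  | cons a u ih =>
    intro u' v v' h
    cases u' with
    | nil => simp at h
    | cons b u' =>
      simp only [List.map_cons, List.cons_append, List.cons.injEq, Option.some.injEq] at h
      obtain ⟨rfl, h2⟩ := h
      obtain ⟨rfl, rfl⟩ := ih u' v v' h2
      exact ⟨rfl, rfl⟩

/-- Let `M` be a monoid with finite generating set `A`. If the word problem
`WP_A^M = { u # v^rev : u, v ∈ A*, u = v in M }` is a regular language, then `M` is
finite. -/
theorem finite_of_regular_word_problem {M : Type*} [Monoid M] {A : Type*} [Fintype A]
    (π : FreeMonoid A →* M) (hsurj : Function.Surjective π)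
    (hreg : (WordProblem π).IsRegular) : Finite M := by
  obtain ⟨σ, _, D, hD⟩ := hreg
  -- choose a representative word for each element
  choose rep hrep using hsurj
  set f : M → σ := fun m => D.eval ((rep m).toList.map some ++ [none]) with hf
  have hinj : Function.Injective f := by
    intro m m' hmm
    -- the word rep m # (rep m)^rev is accepted
    have hacc : ∀ x y : M, f x = f y →
        ((rep x).toList.map some ++ none :: ((rep y).toList.map some).reverse) ∈ D.accepts := by
      intro x y hxy
      have : ((rep y).toList.map some ++ none :: ((rep y).toList.map some).reverse)
          ∈ D.accepts := by
        rw [hD]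
        exact ⟨(rep y).toList, (rep y).toList, rfl, rfl⟩
      have heval : ∀ z : M, D.eval ((rep z).toList.map some ++
          none :: ((rep y).toList.map some).reverse)
          = D.evalFrom (f z) (((rep y).toList.map some).reverse) := by
        intro z
        have : (rep z).toList.map some ++ none :: ((rep y).toList.map some).reverse
            = ((rep z).toList.map some ++ [none]) ++ ((rep y).toList.map some).reverse := by
          simp
        rw [this]
        simp [DFA.eval, DFA.evalFrom, List.foldl_append, hf]
      have h1 : D.eval ((rep x).toList.map some ++
          none :: ((rep y).toList.map some).reverse) ∈ D.accept := by
        rw [heval x, hxy, ← heval y]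
        exact this
      exact h1
    have := hacc m m' hmm
    rw [hD] at this
    obtain ⟨u, v, huv, heq⟩ := this
    obtain ⟨h1, h2⟩ := split_unique _ _ _ _ heq
    have h3 : (rep m').toList.map some = v.map some := by
      have := congrArg List.reverse h2
      simpa using this
    have h4 : (rep m').toList = v := List.map_injective_iff.mpr
      (fun a b => Option.some.inj) h3
    have hm : π (FreeMonoid.ofList (rep m).toList) = m := by
      have : FreeMonoid.ofList (rep m).toList = rep m := rfl
      rw [this, hrep]
    have hm' : π (FreeMonoid.ofList (rep m').toList) = m' := by
      have : FreeMonoid.ofList (rep m').toList = rep m' := rfl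
      rw [this, hrep]
    have hum : (rep m).toList = u := h1
    rw [← hm, ← hm', hum, h4, huv]
  exact Finite.of_injective f hinj
end

section
/- A finite special monoid is a group. Consequently, a special monoid has regular word problem if and only if it is a finite group. -/
open FreeMonoid

section SpecialMonoid

variable {A : Type*}

abbrev specialCon (S : Set (FreeMonoid A)) : Con (FreeMonoid A) :=
  conGen fun x y => x ∈ S ∧ y = 1

theorem infinite_quotient_conGen_of_count_eq [DecidableEq A]
    {r : FreeMonoid A → FreeMonoid A → Prop} (a : A)
    (hr : ∀ x y, r x y → count a x = count a y) :
    Infinite (conGen r).Quotient := by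
  let φ := (conGen r).lift (count a) (Con.conGen_le.mpr hr)
  refine Infinite.of_surjective φ fun n => ⟨(of a ^ n.toAdd : FreeMonoid A), ?_⟩
  simp [φ, count_of, ← ofAdd_nsmul]

theorem exists_mem_toList_of_finite_specialCon {S : Set (FreeMonoid A)}
    [Finite (specialCon S).Quotient] (a : A) : ∃ w ∈ S, a ∈ w.toList := by
  classical
  by_contra! h
  have := infinite_quotient_conGen_of_count_eq (r := fun x y => x ∈ S ∧ y = 1) a (by
    rintro x y ⟨hx, rfl⟩
    exact congrArg Multiplicative.ofAdd (List.count_eq_zero.mpr (h x hx)))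
  exact not_finite (specialCon S).Quotient

theorem FreeMonoid.isUnit_map_of_mem_toList {M : Type*} [Monoid M] [IsDedekindFiniteMonoid M]
    (π : FreeMonoid A →* M) {w : FreeMonoid A} (hw : π w = 1) {a : A} (ha : a ∈ w.toList) :
    IsUnit (π (of a)) := by
  obtain ⟨s, t, hst⟩ := List.append_of_mem ha
  have : IsUnit (π (ofList s) * π (of a) * π (ofList t)) := by
    rw [← ofList_toList w, hst, ofList_append, ofList_cons, ← mul_assoc] at hw
    rw [← map_mul, ← map_mul, hw]
    exact isUnit_one
  exact (IsUnit.mul_iff.mp (IsUnit.mul_iff.mp this).1).2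

theorem FreeMonoid.isUnit_map_of_forall_isUnit {M : Type*} [Monoid M] (π : FreeMonoid A →* M)
    (h : ∀ a, IsUnit (π (of a))) (w : FreeMonoid A) : IsUnit (π w) := by
  induction w using FreeMonoid.inductionOn' with
  | one => simp
  | of_mul x xs ih => rw [map_mul]; exact (h x).mul ih

theorem isUnit_of_finite_specialCon {S : Set (FreeMonoid A)} [Finite (specialCon S).Quotient]
    (x : (specialCon S).Quotient) : IsUnit x := by
  obtain ⟨w, rfl⟩ := (specialCon S).mk'_surjective x
  refine isUnit_map_of_forall_isUnit _ (fun a => ?_) w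
  obtain ⟨w, hw, ha⟩ := exists_mem_toList_of_finite_specialCon (S := S) a
  refine isUnit_map_of_mem_toList _ ?_ ha
  exact (specialCon S).eq.mpr (ConGen.Rel.of _ _ ⟨hw, rfl⟩)

end SpecialMonoid

theorem List.map_some_append_none_cons_inj {α : Type*} {l₁ l₂ : List α}
    {r₁ r₂ : List (Option α)} :
    l₁.map some ++ none :: r₁ = l₂.map some ++ none :: r₂ ↔
      l₁ = l₂ ∧ r₁ = r₂ := by
  induction l₁ generalizing l₂ with
  | nil => cases l₂ <;> simp
  | cons a l₁ ih => cases l₂ <;> simp [ih, and_assoc]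

theorem List.eq_map_some_or_eq_map_some_append_none_cons {α : Type*} (w : List (Option α)) :
    (∃ l : List α, w = l.map some) ∨
      ∃ (l : List α) (r : List (Option α)), w = l.map some ++ none :: r := by
  induction w with
  | nil => exact .inl ⟨[], rfl⟩
  | cons x w ih =>
    rcases x with _ | a
    · exact .inr ⟨[], w, rfl⟩
    · rcases ih with ⟨l, rfl⟩ | ⟨l, r, rfl⟩
      · exact .inl ⟨a :: l, rfl⟩
      · exact .inr ⟨a :: l, r, rfl⟩

namespace WordProblem

variable {A M : Type*} [Monoid M] (π : FreeMonoid A →* M)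

theorem map_some_notMem (l : List A) : l.map some ∉ WordProblem π := by
  rintro ⟨u, v, -, h⟩
  have : none ∈ l.map some := by simp [h]
  simp at this

theorem map_some_append_none_cons_mem_iff (l : List A) (r : List (Option A)) :
    l.map some ++ none :: r ∈ WordProblem π ↔
      ∃ v : List A, r = (v.map some).reverse ∧ π (ofList l) = π (ofList v) := by
  change (∃ u v : List A, _) ↔ _
  simp only [List.map_some_append_none_cons_inj]
  constructor
  · rintro ⟨u, v, huv, rfl, rfl⟩
    exact ⟨v, rfl, huv⟩
  · rintro ⟨v, rfl, hlv⟩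
    exact ⟨l, v, hlv, rfl, rfl⟩

theorem reverse_map_some_mem_leftQuotient_iff (u v : List A) :
    (v.map some).reverse ∈ (WordProblem π).leftQuotient (u.map some ++ [none]) ↔
      π (ofList u) = π (ofList v) := by
  rw [Language.mem_leftQuotient, List.append_assoc, List.singleton_append,
    map_some_append_none_cons_mem_iff]
  constructor
  · rintro ⟨v', hv, huv⟩
    rw [List.reverse_inj, List.map_inj_right fun _ _ => Option.some.inj] at hv
    rwa [hv]
  · exact fun h => ⟨v, rfl, h⟩

theorem finite_of_isRegular (hπ : Function.Surjective π) (h : (WordProblem π).IsRegular) :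
    Finite M := by
  have hrep : ∀ m, ∃ u : List A, π (ofList u) = m := fun m => by
    obtain ⟨w, rfl⟩ := hπ m
    exact ⟨w.toList, by rw [ofList_toList]⟩
  choose rep hrep using hrep
  set g := fun m => (WordProblem π).leftQuotient ((rep m).map some ++ [none])
  have hg : Function.Injective g := fun m m' hmm' => by
    have hm : ((rep m).map some).reverse ∈ g m :=
      (reverse_map_some_mem_leftQuotient_iff π (rep m) (rep m)).mpr rfl
    rwa [hmm', reverse_map_some_mem_leftQuotient_iff, hrep, hrep, eq_comm] at hm
  have : Finite (Set.range g) :=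
    (h.finite_range_leftQuotient.subset (Set.range_comp_subset_range _ _)).to_subtype
  exact Finite.of_injective_finite_range hg

/-- Reading `u # v^rev`, the state is `inl (π u')` while a prefix `u'` of `u` has been read, then
`inr (π u, π v')` while a suffix `v'` of `v` has been read; `none` is a dead state. -/
def dfa : DFA (Option A) (Option (M ⊕ M × M)) where
  step
    | some (.inl m), some a => some (.inl (m * π (of a)))
    | some (.inl m), none => some (.inr (m, 1))
    | some (.inr (m, r)), some a => some (.inr (m, π (of a) * r))
    | _, _ => none
  start := some (.inl 1)
  accept := {s | ∃ m, s = some (.inr (m, m))}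

theorem dfa_evalFrom_none (w : List (Option A)) : (dfa π).evalFrom none w = none := by
  induction w with
  | nil => rfl
  | cons x w ih => cases x <;> exact ih

theorem dfa_evalFrom_inl (m : M) (u : List A) :
    (dfa π).evalFrom (some (.inl m)) (u.map some) = some (.inl (m * π (ofList u))) := by
  induction u generalizing m with
  | nil => simp
  | cons a u ih => exact (ih _).trans (by rw [ofList_cons, map_mul, mul_assoc])

theorem dfa_evalFrom_inr (m r : M) (u : List A) :
    (dfa π).evalFrom (some (.inr (m, r))) (u.map some) =
      some (.inr (m, π (ofList u.reverse) * r)) := by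
  induction u generalizing r with
  | nil => simp
  | cons a u ih =>
    exact (ih _).trans (by rw [List.reverse_cons, ofList_append, map_mul, mul_assoc]; rfl)

theorem mem_dfa_accept (s : Option (M ⊕ M × M)) :
    s ∈ (dfa π).accept ↔ ∃ m, s = some (.inr (m, m)) := Iff.rfl

theorem dfa_eval_map_some (l : List A) :
    (dfa π).eval (l.map some) = some (.inl (π (ofList l))) := by
  rw [DFA.eval, show (dfa π).start = some (.inl 1) from rfl, dfa_evalFrom_inl, one_mul]

theorem dfa_eval_map_some_append_none_cons (l : List A) (r : List (Option A)) :
    (dfa π).eval (l.map some ++ none :: r) =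
      (dfa π).evalFrom (some (.inr (π (ofList l), 1))) r := by
  rw [DFA.eval, DFA.evalFrom_of_append, ← DFA.eval, dfa_eval_map_some]
  rfl

theorem accepts_dfa : (dfa π).accepts = WordProblem π := by
  ext w
  rw [DFA.mem_accepts]
  rcases List.eq_map_some_or_eq_map_some_append_none_cons w with ⟨l, rfl⟩ | ⟨l, r, rfl⟩
  · simp [dfa_eval_map_some, mem_dfa_accept, map_some_notMem]
  rw [map_some_append_none_cons_mem_iff, dfa_eval_map_some_append_none_cons]
  rcases List.eq_map_some_or_eq_map_some_append_none_cons r with ⟨l', rfl⟩ | ⟨l', r', rfl⟩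
  · rw [dfa_evalFrom_inr, mem_dfa_accept]
    simp [← List.map_reverse, List.map_inj_right (f := @some A) fun _ _ => Option.some.inj,
      eq_comm (a := l'), List.reverse_eq_iff]
    exact eq_comm
  · rw [DFA.evalFrom_of_append, dfa_evalFrom_inr]
    refine iff_of_false (fun h => ?_) ?_
    · change (dfa π).evalFrom none r' ∈ _ at h
      simp [dfa_evalFrom_none, mem_dfa_accept] at h
    rintro ⟨v, hv, -⟩
    have : none ∈ (v.map some).reverse := hv ▸ by simp
    simp at this

theorem isRegular [Finite M] : (WordProblem π).IsRegular :=
  have := Fintype.ofFinite M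
  Language.isRegular_iff.mpr ⟨_, inferInstance, dfa π, accepts_dfa π⟩

end WordProblem

theorem special_monoid_regular_word_problem_iff_finite_group_general
    {A : Type*} (S : Finset (FreeMonoid A))
    (c : Con (FreeMonoid A)) (hc : c = conGen (fun x y => x ∈ S ∧ y = 1)) :
    (Finite c.Quotient → ∀ x : c.Quotient, IsUnit x) ∧
    ((WordProblem c.mk').IsRegular ↔ (Finite c.Quotient ∧ ∀ x : c.Quotient, IsUnit x)) := by
  obtain rfl : c = specialCon (S : Set (FreeMonoid A)) := hc
  refine ⟨fun _ => isUnit_of_finite_specialCon, fun h => ?_,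
    fun ⟨_, _⟩ => WordProblem.isRegular _⟩
  have := WordProblem.finite_of_isRegular _ Con.mk'_surjective h
  exact ⟨this, isUnit_of_finite_specialCon⟩

/-- A finite special monoid is a group. Consequently, a special monoid has regular word
problem if and only if it is a finite group.

Here the special monoid `Mon⟨A | w = 1 (w ∈ S)⟩` is realized as the quotient of the free
monoid on the finite alphabet `A` by the congruence generated by the pairs `(w, 1)` for the
finitely many relators `w ∈ S`. -/
theorem special_monoid_regular_word_problem_iff_finite_group
    {A : Type*} [Fintype A] (S : Finset (FreeMonoid A))
    (c : Con (FreeMonoid A)) (hc : c = conGen (fun x y => x ∈ S ∧ y = 1)) :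
    (Finite c.Quotient → ∀ x : c.Quotient, IsUnit x) ∧
    ((WordProblem c.mk').IsRegular ↔ (Finite c.Quotient ∧ ∀ x : c.Quotient, IsUnit x)) :=
  special_monoid_regular_word_problem_iff_finite_group_general S c hc
end

section
/- Let M be a special monoid with presentation over A and let ∂Δ be the set of invertible words none of whose nonempty proper prefixes is invertible. Then no nonempty proper suffix of a word in ∂Δ is invertible; consequently ∂Δ is a biprefix code in A*. -/
/-- Let `M = Mon⟨A | w = 1 (w ∈ S)⟩` be a special monoid over `A` (realized as the quotient
of the free monoid on `A` by the congruence generated by `(w, 1)`, `w ∈ S`), with a word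
called invertible if it represents a unit of `M`. Let `∂Δ` be the set of (nonempty)
invertible words none of whose nonempty proper prefixes is invertible. Then no nonempty
proper suffix of a word in `∂Δ` is invertible; consequently `∂Δ` is a biprefix code in
`A*` (no element is a proper prefix or a proper suffix of another). -/
theorem partialDelta_biprefix_code
    {A : Type*} (S : Set (FreeMonoid A))
    (c : Con (FreeMonoid A)) (hc : c = conGen (fun x y => x ∈ S ∧ y = 1))
    (Inv : List A → Prop) (hInv : ∀ w, Inv w ↔ IsUnit (c.mk' (FreeMonoid.ofList w)))
    (dD : Set (List A))
    (hdD : dD = {w : List A | w ≠ [] ∧ Inv w ∧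
      ∀ p : List A, p <+: w → p ≠ [] → p ≠ w → ¬ Inv p}) :
    (∀ w ∈ dD, ∀ s : List A, s <:+ w → s ≠ [] → s ≠ w → ¬ Inv s) ∧
    (∀ u ∈ dD, ∀ v ∈ dD, u <+: v → u = v) ∧
    (∀ u ∈ dD, ∀ v ∈ dD, u <:+ v → u = v) := by
  have part1 : ∀ w ∈ dD, ∀ s : List A, s <:+ w → s ≠ [] → s ≠ w → ¬ Inv s := by
    intro w hw s hs hne hnw hInvs
    rw [hdD] at hw
    obtain ⟨hwne, hInvw, hpref⟩ := hw
    obtain ⟨p, hp⟩ := hs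
    have hpne : p ≠ [] := by
      rintro rfl
      simp only [List.nil_append] at hp
      exact hnw hp
    have hpnw : p ≠ w := by
      rintro rfl
      exact hne (by simpa using congrArg List.length hp)
    refine hpref p ⟨s, hp⟩ hpne hpnw ?_
    -- p is invertible: π(p) = π(w) π(s)⁻¹
    rw [hInv] at hInvw hInvs ⊢
    have hsplit : FreeMonoid.ofList w = FreeMonoid.ofList p * FreeMonoid.ofList s := by
      rw [← hp]; rfl
    rw [hsplit, map_mul] at hInvw
    obtain ⟨u, hu⟩ := hInvw
    obtain ⟨v, hv⟩ := hInvs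
    refine ⟨u * v⁻¹, ?_⟩
    rw [Units.val_mul, hu, mul_assoc, ← hv, Units.mul_inv, mul_one]
  refine ⟨part1, ?_, ?_⟩
  · intro u hu v hv huv
    by_contra hne
    have hu' := hu; rw [hdD] at hu' hv
    exact hv.2.2 u huv hu'.1 hne hu'.2.1
  · intro u hu v hv huv
    by_contra hne
    have hu' := hu; rw [hdD] at hu'
    exact part1 v hv u huv hu'.1 hne hu'.2.1
end

section
/- If p, q are elements of a monoid M with pq = 1 and qp ≠ 1, then the submonoid of M generated by {p, q} is isomorphic to the bicyclic monoid Mon⟨b, c | bc = 1⟩ (via b ↦ p, c ↦ q). -/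
/-- The defining congruence of the bicyclic monoid `B = Mon⟨b, c | bc = 1⟩`, on the free
monoid over `Bool` with `true` playing the role of `b` and `false` that of `c`. -/
def bicyclicCon : Con (FreeMonoid Bool) :=
  conGen (fun x y => x = FreeMonoid.ofList [true, false] ∧ y = 1)

/-!
Every element of the bicyclic monoid has the normal form `c ^ i * b ^ j`, so injectivity comes
down to the elements `q ^ i * p ^ j` of `M` being pairwise distinct. Cancelling with `pq = 1`
reduces an equation `q ^ i * p ^ j = q ^ k * p ^ l` with `i ≤ k` to `q ^ n * p ^ n = 1` for
`n = k - i`, and conjugating this by `p ^ (n - 1)` gives `qp = 1` unless `n = 0`.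
-/

section OneSidedInverse

variable {M : Type*} [Monoid M] {p q : M}

theorem pow_mul_pow_of_le (hpq : p * q = 1) {m n : ℕ} (h : n ≤ m) :
    p ^ m * q ^ n = p ^ (m - n) := by
  obtain ⟨d, rfl⟩ := Nat.exists_eq_add_of_le' h
  rw [pow_add, mul_assoc, pow_mul_pow_eq_one _ hpq, mul_one, Nat.add_sub_cancel]

theorem pow_mul_pow_of_ge (hpq : p * q = 1) {m n : ℕ} (h : m ≤ n) :
    p ^ m * q ^ n = q ^ (n - m) := by
  obtain ⟨d, rfl⟩ := Nat.exists_eq_add_of_le h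
  rw [pow_add, ← mul_assoc, pow_mul_pow_eq_one _ hpq, one_mul, Nat.add_sub_cancel_left]

theorem eq_zero_of_pow_mul_pow_eq_one (hpq : p * q = 1) (hqp : q * p ≠ 1) {n : ℕ}
    (h : q ^ n * p ^ n = 1) : n = 0 := by
  obtain _ | n := n
  · rfl
  refine absurd ?_ hqp
  calc q * p = (p ^ n * q ^ (n + 1)) * (p ^ (n + 1) * q ^ n) := by
        rw [pow_mul_pow_of_ge hpq n.le_succ, pow_mul_pow_of_le hpq n.le_succ]; simp
    _ = p ^ n * (q ^ (n + 1) * p ^ (n + 1)) * q ^ n := by simp only [mul_assoc]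
    _ = 1 := by rw [h, mul_one, pow_mul_pow_eq_one _ hpq]

theorem pow_injective_of_mul_eq_one (hpq : p * q = 1) (hqp : q * p ≠ 1) :
    Function.Injective (p ^ · : ℕ → M) := by
  have pow_eq_one : ∀ {n : ℕ}, p ^ n = 1 → n = 0 := fun {n} h ↦ by
    have hq : q ^ n = 1 := by simpa [h] using pow_mul_pow_eq_one n hpq
    exact eq_zero_of_pow_mul_pow_eq_one hpq hqp (by rw [h, hq, mul_one])
  intro a b (hab : p ^ a = p ^ b)
  wlog h : a ≤ b generalizing a b
  · exact (this hab.symm (le_of_not_ge h)).symm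
  have : p ^ (b - a) = 1 := by
    rw [← pow_mul_pow_of_le hpq h, ← hab, pow_mul_pow_eq_one _ hpq]
  have := pow_eq_one this
  omega

theorem eq_and_eq_of_pow_mul_pow_eq (hpq : p * q = 1) (hqp : q * p ≠ 1) {i j k l : ℕ}
    (h : q ^ i * p ^ j = q ^ k * p ^ l) : i = k ∧ j = l := by
  wlog hik : i ≤ k generalizing i j k l
  · exact (this h.symm (le_of_not_ge hik)).imp Eq.symm Eq.symm
  set n := k - i
  have hj : p ^ j = q ^ n * p ^ l := by
    rw [← one_mul (p ^ j), ← pow_mul_pow_eq_one i hpq, mul_assoc, h,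
      ← mul_assoc, pow_mul_pow_of_ge hpq hik]
  have hl : l = n + j := by
    refine pow_injective_of_mul_eq_one hpq hqp ?_
    simp only [pow_add, hj, ← mul_assoc, pow_mul_pow_eq_one _ hpq, one_mul]
  have hn : q ^ n * p ^ n = 1 :=
    calc q ^ n * p ^ n
        _ = q ^ n * p ^ n * (p ^ j * q ^ j) := by rw [pow_mul_pow_eq_one j hpq, mul_one]
        _ = q ^ n * p ^ l * q ^ j := by rw [hl, pow_add]; simp only [mul_assoc]
        _ = 1 := by rw [← hj, pow_mul_pow_eq_one j hpq]
  have := eq_zero_of_pow_mul_pow_eq_one hpq hqp hn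
  omega

end OneSidedInverse

abbrev Bicyclic : Type := bicyclicCon.Quotient

namespace Bicyclic

def b : Bicyclic := bicyclicCon.mk' (FreeMonoid.of true)

def c : Bicyclic := bicyclicCon.mk' (FreeMonoid.of false)

theorem b_mul_c : b * c = 1 :=
  (Con.eq _).mpr (ConGen.Rel.of _ _ ⟨rfl, rfl⟩)

theorem exists_eq_c_pow_mul_b_pow (x : Bicyclic) : ∃ i j : ℕ, x = c ^ i * b ^ j := by
  induction x using Con.induction_on with | H w => ?_
  induction w using FreeMonoid.inductionOn' with
  | one => exact ⟨0, 0, by simp⟩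
  | of_mul a w ih =>
    obtain ⟨i, j, hw⟩ := ih
    rw [Con.coe_mul, hw]
    cases a with
    | false => exact ⟨i + 1, j, by rw [pow_succ', mul_assoc]; rfl⟩
    | true =>
      change ∃ _ _, b * _ = _
      cases i with
      | zero => exact ⟨0, j + 1, by simp [pow_succ']⟩
      | succ i =>
        exact ⟨i, j, by rw [pow_succ', ← mul_assoc, ← mul_assoc, b_mul_c, one_mul]⟩

theorem closure_b_c : Submonoid.closure {b, c} = ⊤ := by
  refine eq_top_iff.mpr fun x _ ↦ ?_
  obtain ⟨i, j, rfl⟩ := exists_eq_c_pow_mul_b_pow x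
  exact mul_mem (pow_mem (Submonoid.subset_closure (by simp)) i)
    (pow_mem (Submonoid.subset_closure (by simp)) j)

variable {M : Type*} [Monoid M] {p q : M}

def lift (hpq : p * q = 1) : Bicyclic →* M :=
  bicyclicCon.lift (FreeMonoid.lift fun x ↦ if x then p else q) <| Con.conGen_le.mpr <| by
    rintro _ _ ⟨rfl, rfl⟩
    simpa [Con.ker_rel] using hpq

@[simp]
theorem lift_b (hpq : p * q = 1) : lift hpq b = p :=
  (Con.lift_mk' _ _).trans (by simp)

@[simp]
theorem lift_c (hpq : p * q = 1) : lift hpq c = q :=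
  (Con.lift_mk' _ _).trans (by simp)

theorem lift_injective (hpq : p * q = 1) (hqp : q * p ≠ 1) : Function.Injective (lift hpq) := by
  intro x y hxy
  obtain ⟨i, j, rfl⟩ := exists_eq_c_pow_mul_b_pow x
  obtain ⟨k, l, rfl⟩ := exists_eq_c_pow_mul_b_pow y
  simp only [map_mul, map_pow, lift_b, lift_c] at hxy
  obtain ⟨rfl, rfl⟩ := eq_and_eq_of_pow_mul_pow_eq hpq hqp hxy
  rfl

theorem mrange_lift (hpq : p * q = 1) : MonoidHom.mrange (lift hpq) = Submonoid.closure {p, q} := by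
  rw [MonoidHom.mrange_eq_map, ← closure_b_c, MonoidHom.map_mclosure, Set.image_pair, lift_b,
    lift_c]

end Bicyclic

/-- If `p, q` are elements of a monoid `M` with `pq = 1` and `qp ≠ 1`, then the submonoid
of `M` generated by `{p, q}` is isomorphic to the bicyclic monoid `Mon⟨b, c | bc = 1⟩`
(via `b ↦ p`, `c ↦ q`): the monoid homomorphism from the bicyclic monoid sending `b` to
`p` and `c` to `q` is injective, and its range is the submonoid generated by `p` and
`q`. -/
theorem bicyclic_of_one_sided_inverse {M : Type*} [Monoid M] (p q : M)
    (hpq : p * q = 1) (hqp : q * p ≠ 1) :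
    ∃ f : bicyclicCon.Quotient →* M, Function.Injective f ∧
      f (bicyclicCon.mk' (FreeMonoid.ofList [true])) = p ∧
      f (bicyclicCon.mk' (FreeMonoid.ofList [false])) = q ∧
      MonoidHom.mrange f = Submonoid.closure {p, q} :=
  ⟨Bicyclic.lift hpq, Bicyclic.lift_injective hpq hqp, Bicyclic.lift_b hpq, Bicyclic.lift_c hpq,
    Bicyclic.mrange_lift hpq⟩
end
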